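/- Let H be a Hilbert space and (x_n) a bounded sequence in H. If lim_{H→∞} (1/H)∑_{h=1}^H limsup_{N→∞} |(1/N)∑_{n=1}^N ⟨x_{n+h}, x_n⟩| = 0, then ‖(1/N)∑_{n=1}^N x_n‖ → 0 as N → ∞. -/

import Mathlib

open Filter Finset
open scoped InnerProductSpace

/-!
Van der Corput's trick. Shifting the range of summation by `k` changes `S_N = ∑_{n ≤ N} x n` by
at most `2kC`, so `K • S_N` is, up to `O(K²)`, the sum over `n ≤ N` of the windows
`w n = ∑_{k ≤ K} x (n + k)`. Cauchy–Schwarz gives `‖∑ w n‖² ≤ N ∑ ‖w n‖²`, and expanding `‖w n‖²`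
produces the correlations `⟪x (n + k), x (n + k')⟫`, which up to another shift are those at lag
`|k - k'|`; every lag `d ≥ 1` occurs at most `2K` times. Hence
`(‖S_N‖ / N)² ≤ 2C²/K + (4/K) ∑_{d ≤ K} ‖γ_N(d)‖ + O(K²/N)` with
`γ_N(d) = N⁻¹ ∑_{n ≤ N} ⟪x (n + d), x n⟫`; let `N → ∞`, then `K → ∞`.
-/

section Shift

variable {E : Type*} [SeminormedAddCommGroup E] {f : ℕ → E} {C : ℝ}

lemma norm_sum_Icc_shift_sub_le (hf : ∀ n, ‖f n‖ ≤ C) (N h : ℕ) :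
    ‖∑ n ∈ Icc 1 N, f (n + h) - ∑ n ∈ Icc 1 N, f n‖ ≤ 2 * h * C := by
  induction h with
  | zero => simp
  | succ h ih =>
    have htel : ∑ n ∈ Icc 1 N, f (n + (h + 1)) - ∑ n ∈ Icc 1 N, f (n + h)
        = f (N + 1 + h) - f (1 + h) := by
      rw [← sum_sub_distrib, ← Ico_add_one_right_eq_Icc,
        ← sum_Ico_sub (fun n => f (n + h)) (by omega : 1 ≤ N + 1)]
      simp only [add_right_comm _ 1 h, add_assoc]
    calc ‖∑ n ∈ Icc 1 N, f (n + (h + 1)) - ∑ n ∈ Icc 1 N, f n‖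
        ≤ ‖f (N + 1 + h) - f (1 + h)‖ + ‖∑ n ∈ Icc 1 N, f (n + h) - ∑ n ∈ Icc 1 N, f n‖ := by
          rw [← htel]; exact norm_sub_le_norm_sub_add_norm_sub _ _ _
      _ ≤ (C + C) + 2 * h * C := add_le_add ((norm_sub_le _ _).trans (add_le_add (hf _) (hf _))) ih
      _ = 2 * ↑(h + 1) * C := by push_cast; ring

lemma norm_nsmul_sum_Icc_sub_sum_sum_shift_le (hf : ∀ n, ‖f n‖ ≤ C) (N K : ℕ) :
    ‖K • ∑ n ∈ Icc 1 N, f n - ∑ k ∈ Icc 1 K, ∑ n ∈ Icc 1 N, f (n + k)‖ ≤ 2 * K ^ 2 * C := by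
  have hC : 0 ≤ C := (norm_nonneg _).trans (hf 0)
  have hK : K • ∑ n ∈ Icc 1 N, f n = ∑ k ∈ Icc 1 K, ∑ n ∈ Icc 1 N, f n := by simp
  calc ‖K • ∑ n ∈ Icc 1 N, f n - ∑ k ∈ Icc 1 K, ∑ n ∈ Icc 1 N, f (n + k)‖
      ≤ ∑ k ∈ Icc 1 K, ‖∑ n ∈ Icc 1 N, f (n + k) - ∑ n ∈ Icc 1 N, f n‖ := by
        rw [hK, ← sum_sub_distrib, ← norm_neg, ← sum_neg_distrib]
        simpa only [neg_sub] using norm_sum_le _ _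
    _ ≤ ∑ k ∈ Icc 1 K, 2 * K * C := by
        refine sum_le_sum fun k hk => (norm_sum_Icc_shift_sub_le hf N k).trans ?_
        have : (k : ℝ) ≤ K := by exact_mod_cast (mem_Icc.1 hk).2
        gcongr
    _ = 2 * K ^ 2 * C := by simp; ring

end Shift

lemma sum_comp_le_sum_of_injOn {ι κ M : Type*} [AddCommMonoid M] [PartialOrder M]
    [IsOrderedAddMonoid M] {s : Finset ι} {t : Finset κ} {g : ι → κ} {f : κ → M}
    (hg : Set.InjOn g s) (hst : Set.MapsTo g s t) (hf : ∀ j ∈ t, 0 ≤ f j) :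
    ∑ i ∈ s, f (g i) ≤ ∑ j ∈ t, f j := by
  classical
  rw [← sum_image hg]
  exact sum_le_sum_of_subset_of_nonneg (image_subset_iff.2 hst) fun j hj _ => hf j hj

lemma sum_Icc_comp_dist_le {T : ℕ → ℝ} (hT : ∀ d, 0 ≤ T d) {k K : ℕ} (hk : k ≤ K) :
    ∑ k' ∈ Icc 1 K, T (k.dist k') ≤ T 0 + 2 * ∑ d ∈ Icc 1 K, T d := by
  rw [← sum_filter_add_sum_filter_not _ (· ≤ k)]
  have below : ∑ k' ∈ Icc 1 K with k' ≤ k, T (k.dist k') ≤ T 0 + ∑ d ∈ Icc 1 K, T d := by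
    rw [← sum_insert (s := Icc 1 K) (by simp)]
    refine sum_comp_le_sum_of_injOn (fun a ha b hb hab => ?_) (fun a ha => ?_) fun d _ => hT d
    all_goals simp only [coe_filter, mem_Icc, Set.mem_ofPred_eq, coe_insert, coe_Icc,
      Set.mem_insert_iff, Set.mem_Icc] at *
    all_goals unfold Nat.dist at *; omega
  have above : ∑ k' ∈ Icc 1 K with ¬k' ≤ k, T (k.dist k') ≤ ∑ d ∈ Icc 1 K, T d := by
    refine sum_comp_le_sum_of_injOn (fun a ha b hb hab => ?_) (fun a ha => ?_) fun d _ => hT d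
    all_goals simp only [coe_filter, mem_Icc, Set.mem_ofPred_eq, coe_Icc, Set.mem_Icc] at *
    all_goals unfold Nat.dist at *; omega
  linarith

lemma tendsto_nhds_zero_of_eventually_le_add {α β : Type*} {l : Filter α} {l' : Filter β}
    [l'.NeBot] {u : α → ℝ} {g : β → ℝ} (hu : ∀ a, 0 ≤ u a) (hg : Tendsto g l' (nhds 0))
    (h : ∀ᶠ K in l', ∀ δ > 0, ∀ᶠ a in l, u a ≤ g K + δ) : Tendsto u l (nhds 0) := by
  refine tendsto_order.2 ⟨fun b hb => Eventually.of_forall fun a => hb.trans_le (hu a),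
    fun ε hε => ?_⟩
  obtain ⟨K, hK, hgK⟩ := (h.and (hg.eventually (gt_mem_nhds (half_pos hε)))).exists
  exact (hK _ (half_pos hε)).mono fun a ha => by linarith

lemma eventually_sum_le_sum_limsup_add {ι α : Type*} {l : Filter α} (s : Finset ι)
    {f : ι → α → ℝ} (hf : ∀ i ∈ s, IsBoundedUnder (· ≤ ·) l (f i)) {δ : ℝ} (hδ : 0 < δ) :
    ∀ᶠ a in l, ∑ i ∈ s, f i a ≤ ∑ i ∈ s, limsup (f i) l + δ := by
  have hε : 0 < δ / (#s + 1) := by positivity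
  have hlt : ∀ᶠ a in l, ∀ i ∈ s, f i a < limsup (f i) l + δ / (#s + 1) :=
    (eventually_all_finset s).2 fun i hi =>
      eventually_lt_of_limsup_lt (lt_add_of_pos_right _ hε) (hf i hi)
  filter_upwards [hlt] with a ha
  calc ∑ i ∈ s, f i a ≤ ∑ i ∈ s, (limsup (f i) l + δ / (#s + 1)) :=
        sum_le_sum fun i hi => (ha i hi).le
    _ = ∑ i ∈ s, limsup (f i) l + #s * (δ / (#s + 1)) := by
        rw [sum_add_distrib, sum_const, nsmul_eq_mul]
    _ ≤ ∑ i ∈ s, limsup (f i) l + δ := by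
        gcongr
        rw [mul_div_assoc', div_le_iff₀ (by positivity)]
        nlinarith

section InnerProduct

variable {𝕜 H : Type*} [RCLike 𝕜] [NormedAddCommGroup H] [InnerProductSpace 𝕜 H]

lemma sq_norm_sum_eq_sum_sum_re_inner {ι : Type*} (s : Finset ι) (v : ι → H) :
    ‖∑ i ∈ s, v i‖ ^ 2 = ∑ i ∈ s, ∑ j ∈ s, RCLike.re ⟪v i, v j⟫_𝕜 := by
  rw [@norm_sq_eq_re_inner 𝕜, sum_inner, map_sum]
  simp only [inner_sum, map_sum]

variable {x : ℕ → H} {C : ℝ}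

lemma norm_inner_le_sq (hx : ∀ n, ‖x n‖ ≤ C) (m n : ℕ) : ‖⟪x m, x n⟫_𝕜‖ ≤ C ^ 2 :=
  (norm_inner_le_norm _ _).trans <| by
    nlinarith [hx m, hx n, norm_nonneg (x m), norm_nonneg (x n)]

lemma norm_sum_Icc_inner_le (hx : ∀ n, ‖x n‖ ≤ C) (N d : ℕ) :
    ‖∑ n ∈ Icc 1 N, ⟪x (n + d), x n⟫_𝕜‖ ≤ N * C ^ 2 :=
  (norm_sum_le _ _).trans <| by
    simpa using sum_le_card_nsmul (Icc 1 N) _ _ fun n _ => norm_inner_le_sq (𝕜 := 𝕜) hx (n + d) n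

lemma norm_sum_inner_shift_le (hx : ∀ n, ‖x n‖ ≤ C) (N d k : ℕ) :
    ‖∑ n ∈ Icc 1 N, ⟪x (n + (k + d)), x (n + k)⟫_𝕜‖
      ≤ ‖∑ n ∈ Icc 1 N, ⟪x (n + d), x n⟫_𝕜‖ + 2 * k * C ^ 2 := by
  have hshift := norm_sum_Icc_shift_sub_le (f := fun m => ⟪x (m + d), x m⟫_𝕜)
    (fun m => norm_inner_le_sq hx _ _) N k
  simp only [← add_assoc] at hshift ⊢
  linarith [norm_le_norm_add_norm_sub' (∑ n ∈ Icc 1 N, ⟪x (n + k + d), x (n + k)⟫_𝕜)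
    (∑ n ∈ Icc 1 N, ⟪x (n + d), x n⟫_𝕜)]

lemma re_sum_inner_shift_le (hx : ∀ n, ‖x n‖ ≤ C) (N k k' : ℕ) :
    RCLike.re (∑ n ∈ Icc 1 N, ⟪x (n + k), x (n + k')⟫_𝕜)
      ≤ ‖∑ n ∈ Icc 1 N, ⟪x (n + k.dist k'), x n⟫_𝕜‖ + 2 * min k k' * C ^ 2 := by
  wlog hk : k' ≤ k generalizing k k'
  · have hsymm : RCLike.re (∑ n ∈ Icc 1 N, ⟪x (n + k), x (n + k')⟫_𝕜)
        = RCLike.re (∑ n ∈ Icc 1 N, ⟪x (n + k'), x (n + k)⟫_𝕜) := by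
      rw [← RCLike.conj_re, map_sum]
      simp only [inner_conj_symm]
    rw [hsymm, Nat.dist_comm, min_comm]
    exact this k' k (by omega)
  obtain ⟨d, rfl⟩ := Nat.exists_eq_add_of_le hk
  have hdist : (k' + d).dist k' = d := by unfold Nat.dist; omega
  rw [hdist, min_eq_right hk]
  exact (RCLike.re_le_norm _).trans (norm_sum_inner_shift_le hx N d k')

lemma sum_sq_norm_sum_Icc_shift_le (hx : ∀ n, ‖x n‖ ≤ C) (N K : ℕ) :
    ∑ n ∈ Icc 1 N, ‖∑ k ∈ Icc 1 K, x (n + k)‖ ^ 2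
      ≤ K * (N * C ^ 2 + 2 * ∑ d ∈ Icc 1 K, ‖∑ n ∈ Icc 1 N, ⟪x (n + d), x n⟫_𝕜‖)
        + 2 * K ^ 3 * C ^ 2 := by
  set T : ℕ → ℝ := fun d => ‖∑ n ∈ Icc 1 N, ⟪x (n + d), x n⟫_𝕜‖
  have hrow : ∀ k ∈ Icc 1 K, ∑ k' ∈ Icc 1 K, (T (k.dist k') + 2 * K * C ^ 2)
      ≤ N * C ^ 2 + 2 * ∑ d ∈ Icc 1 K, T d + 2 * K ^ 2 * C ^ 2 := by
    intro k hk
    rw [sum_add_distrib, sum_const, Nat.card_Icc, nsmul_eq_mul]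
    have h0 : T 0 ≤ N * C ^ 2 := by simpa [T] using norm_sum_Icc_inner_le (𝕜 := 𝕜) hx N 0
    have := sum_Icc_comp_dist_le (T := T) (fun _ => norm_nonneg _) (mem_Icc.1 hk).2
    push_cast
    nlinarith
  calc ∑ n ∈ Icc 1 N, ‖∑ k ∈ Icc 1 K, x (n + k)‖ ^ 2
      = ∑ k ∈ Icc 1 K, ∑ k' ∈ Icc 1 K,
          RCLike.re (∑ n ∈ Icc 1 N, ⟪x (n + k), x (n + k')⟫_𝕜) := by
        simp only [sq_norm_sum_eq_sum_sum_re_inner (𝕜 := 𝕜), map_sum]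
        rw [sum_comm]
        exact sum_congr rfl fun _ _ => sum_comm
    _ ≤ ∑ k ∈ Icc 1 K, ∑ k' ∈ Icc 1 K, (T (k.dist k') + 2 * K * C ^ 2) := by
        gcongr with k hk k' hk'
        refine (re_sum_inner_shift_le hx N k k').trans ?_
        have : ((min k k' : ℕ) : ℝ) ≤ K := by
          exact_mod_cast (min_le_left _ _).trans (mem_Icc.1 hk).2
        have hC : 0 ≤ C ^ 2 := sq_nonneg C
        gcongr
    _ ≤ ∑ k ∈ Icc 1 K, (N * C ^ 2 + 2 * ∑ d ∈ Icc 1 K, T d + 2 * K ^ 2 * C ^ 2) :=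
        sum_le_sum hrow
    _ = K * (N * C ^ 2 + 2 * ∑ d ∈ Icc 1 K, T d) + 2 * K ^ 3 * C ^ 2 := by
        simp only [sum_const, Nat.card_Icc, nsmul_eq_mul]
        push_cast
        ring

lemma sq_norm_sum_Icc_div_le (hx : ∀ n, ‖x n‖ ≤ C) {N K : ℕ} (hN : 1 ≤ N) (hK : 1 ≤ K) :
    (‖∑ n ∈ Icc 1 N, x n‖ / N) ^ 2
      ≤ 2 * C ^ 2 / K
        + 4 * ((K : ℝ)⁻¹ * ∑ d ∈ Icc 1 K, ‖(N : 𝕜)⁻¹ * ∑ n ∈ Icc 1 N, ⟪x (n + d), x n⟫_𝕜‖)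
        + 12 * K ^ 2 * C ^ 2 / N := by
  set S := ∑ n ∈ Icc 1 N, x n
  set B := ∑ k ∈ Icc 1 K, ∑ n ∈ Icc 1 N, x (n + k)
  set τ := ∑ d ∈ Icc 1 K, ‖∑ n ∈ Icc 1 N, ⟪x (n + d), x n⟫_𝕜‖
  have hshift : K * ‖S‖ ≤ ‖B‖ + 2 * K ^ 2 * C := by
    have := norm_nsmul_sum_Icc_sub_sum_sum_shift_le hx N K
    rw [← nsmul_eq_mul, ← RCLike.norm_nsmul 𝕜]
    linarith [norm_le_norm_add_norm_sub' (K • S) B]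
  have hcs : ‖B‖ ^ 2 ≤ N * ∑ n ∈ Icc 1 N, ‖∑ k ∈ Icc 1 K, x (n + k)‖ ^ 2 := by
    rw [show B = ∑ n ∈ Icc 1 N, ∑ k ∈ Icc 1 K, x (n + k) from sum_comm]
    have := sq_sum_le_card_mul_sum_sq (s := Icc 1 N) (f := fun n => ‖∑ k ∈ Icc 1 K, x (n + k)‖)
    rw [Nat.card_Icc, Nat.add_sub_cancel] at this
    exact (pow_le_pow_left₀ (norm_nonneg _) (norm_sum_le _ _) 2).trans this
  have hwin := sum_sq_norm_sum_Icc_shift_le (𝕜 := 𝕜) hx N K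
  have hτ : ∑ d ∈ Icc 1 K, ‖(N : 𝕜)⁻¹ * ∑ n ∈ Icc 1 N, ⟪x (n + d), x n⟫_𝕜‖ = τ / N := by
    simp only [norm_mul, norm_inv, RCLike.norm_natCast, τ, sum_div]
    exact sum_congr rfl fun _ _ => inv_mul_eq_div _ _
  have hN' : (1 : ℝ) ≤ N := by exact_mod_cast hN
  have hK' : (1 : ℝ) ≤ K := by exact_mod_cast hK
  have hkey : (K : ℝ) ^ 2 * ‖S‖ ^ 2
      ≤ 2 * K * N ^ 2 * C ^ 2 + 4 * K * N * τ + 12 * K ^ 4 * C ^ 2 * N := by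
    have hb : 0 ≤ ‖B‖ := norm_nonneg _
    have hK3 : (K : ℝ) ^ 3 ≤ K ^ 4 := pow_le_pow_right₀ hK' (by norm_num)
    calc (K : ℝ) ^ 2 * ‖S‖ ^ 2 = (K * ‖S‖) ^ 2 := by ring
      _ ≤ (‖B‖ + 2 * K ^ 2 * C) ^ 2 := pow_le_pow_left₀ (by positivity) hshift 2
      _ ≤ 2 * ‖B‖ ^ 2 + 8 * K ^ 4 * C ^ 2 := by nlinarith [sq_nonneg (‖B‖ - 2 * K ^ 2 * C)]
      _ ≤ 2 * (N * (K * (N * C ^ 2 + 2 * τ) + 2 * K ^ 3 * C ^ 2)) + 8 * K ^ 4 * C ^ 2 := by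
        gcongr; exact hcs.trans (by gcongr)
      _ ≤ 2 * K * N ^ 2 * C ^ 2 + 4 * K * N * τ + 12 * K ^ 4 * C ^ 2 * N := by
        have hC2 : 0 ≤ C ^ 2 := sq_nonneg C
        nlinarith [mul_le_mul_of_nonneg_left hK3 (by positivity : (0 : ℝ) ≤ N * C ^ 2),
          mul_le_mul_of_nonneg_left hN' (by positivity : (0 : ℝ) ≤ K ^ 4 * C ^ 2)]
  rw [hτ, div_pow, div_le_iff₀ (by positivity)]
  refine le_of_mul_le_mul_left (hkey.trans_eq ?_) (by positivity : (0 : ℝ) < K ^ 2)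
  field_simp

lemma eventually_sq_norm_sum_Icc_div_le (hx : ∀ n, ‖x n‖ ≤ C) {K : ℕ} (hK : 1 ≤ K) {δ : ℝ}
    (hδ : 0 < δ) :
    ∀ᶠ N : ℕ in atTop, (‖∑ n ∈ Icc 1 N, x n‖ / N) ^ 2
      ≤ 2 * C ^ 2 / K + 4 * ((K : ℝ)⁻¹ * ∑ d ∈ Icc 1 K,
          limsup (fun N : ℕ => ‖(N : 𝕜)⁻¹ * ∑ n ∈ Icc 1 N, ⟪x (n + d), x n⟫_𝕜‖) atTop) + δ := by
  have hbdd : ∀ d ∈ Icc 1 K, IsBoundedUnder (· ≤ ·) atTop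
      (fun N : ℕ => ‖(N : 𝕜)⁻¹ * ∑ n ∈ Icc 1 N, ⟪x (n + d), x n⟫_𝕜‖) := by
    refine fun d _ => isBoundedUnder_of_eventually_le (a := C ^ 2) ?_
    filter_upwards [eventually_ge_atTop 1] with N hN
    rw [norm_mul, norm_inv, RCLike.norm_natCast, inv_mul_le_iff₀ (by positivity)]
    exact norm_sum_Icc_inner_le hx N d
  have hK' : (K : ℝ)⁻¹ ≤ 1 := inv_le_one_of_one_le₀ (by exact_mod_cast hK)
  filter_upwards [eventually_sum_le_sum_limsup_add (Icc 1 K) hbdd (by positivity : 0 < δ / 8),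
    eventually_ge_atTop 1, (tendsto_const_div_atTop_nhds_zero_nat (12 * K ^ 2 * C ^ 2)).eventually
      (gt_mem_nhds (half_pos hδ))] with N hsum hN hsmall
  refine (sq_norm_sum_Icc_div_le (𝕜 := 𝕜) hx hN hK).trans ?_
  have := mul_le_mul_of_nonneg_left hsum (by positivity : (0 : ℝ) ≤ (K : ℝ)⁻¹)
  nlinarith

end InnerProduct

theorem vdc_variant_iii_general
    {H : Type*} [NormedAddCommGroup H] [InnerProductSpace ℂ H]
    (x : ℕ → H) (hbdd : ∃ C : ℝ, ∀ n, ‖x n‖ ≤ C)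
    (hyp : Tendsto
      (fun M : ℕ => ((M : ℝ))⁻¹ * ∑ h ∈ Finset.Icc 1 M, Filter.limsup
        (fun N : ℕ => ‖((N : ℂ))⁻¹ * ∑ n ∈ Finset.Icc 1 N, ⟪x (n + h), x n⟫_ℂ‖)
        atTop)
      atTop (nhds 0)) :
    Tendsto (fun N : ℕ => ‖((N : ℝ))⁻¹ • ∑ n ∈ Finset.Icc 1 N, x n‖)
      atTop (nhds 0) := by
  obtain ⟨C, hC⟩ := hbdd
  have hbound := (tendsto_const_div_atTop_nhds_zero_nat (2 * C ^ 2)).add (hyp.const_mul 4)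
  rw [mul_zero, add_zero] at hbound
  have hsq := tendsto_nhds_zero_of_eventually_le_add (fun _ => sq_nonneg _) hbound
    ((eventually_ge_atTop 1).mono fun K hK δ hδ => eventually_sq_norm_sum_Icc_div_le hC hK hδ)
  simpa [norm_smul, inv_mul_eq_div, Real.sqrt_sq_eq_abs, abs_div] using hsq.sqrt

theorem vdc_variant_iii
    {H : Type*} [NormedAddCommGroup H] [InnerProductSpace ℂ H] [CompleteSpace H]
    (x : ℕ → H) (hbdd : ∃ C : ℝ, ∀ n, ‖x n‖ ≤ C)
    (hyp : Tendsto
      (fun M : ℕ => ((M : ℝ))⁻¹ * ∑ h ∈ Finset.Icc 1 M, Filter.limsup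
        (fun N : ℕ => ‖((N : ℂ))⁻¹ * ∑ n ∈ Finset.Icc 1 N, ⟪x (n + h), x n⟫_ℂ‖)
        atTop)
      atTop (nhds 0)) :
    Tendsto (fun N : ℕ => ‖((N : ℝ))⁻¹ • ∑ n ∈ Finset.Icc 1 N, x n‖)
      atTop (nhds 0) :=
  vdc_variant_iii_general x hbdd hyp
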